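/- Let V be a finite-dimensional real vector space equipped with null data (γ, ℓ, ℓ⁽²⁾, P, n, n⁽²⁾ = 0) satisfying the four contraction identities, and let S ⊂ V be a codimension-one subspace with n ∉ S, so that h := γ restricted to S × S is nondegenerate. Set ℓ_∥ := ℓ|_S and let ℓ_∥^♯ ∈ S be the vector with h(ℓ_∥^♯, ·) = ℓ_∥. Then for every β ∈ V* with β(n) = 0, one has P(β,·) = β_∥^♯ − β(ℓ_∥^♯)·n, where β_∥^♯ ∈ S is the vector with h(β_∥^♯, ·) = β|_S and P(β,·) ∈ V** is identified with a vector of V. -/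

import Mathlib

/-! Since `n` is null, identity (4) at a vector `X` with `γ(X,·) = 0` reads `ℓ(X) n = X`, so the
radical of `γ` is exactly `span{n}`. A transverse hyperplane `S` is a complement of this radical,
hence `γ|_S` is nondegenerate and `♯` is defined on `S`. If `h(β_∥^♯,·) = β|_S` and `β(n) = 0`, then
`γ(β_∥^♯,·) = β` on all of `V = S ⊕ span{n}`, and identity (4) at `X = β_∥^♯` gives the formula,
because `ℓ(β_∥^♯) = h(ℓ_∥^♯, β_∥^♯) = β(ℓ_∥^♯)`. -/

open Module

/-- The vector of `V` corresponding to `P(ρ,·) ∈ V**`, via the canonical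
identification `V ≅ V**`. -/
noncomputable def Pvec {V : Type*} [AddCommGroup V] [Module ℝ V] [FiniteDimensional ℝ V]
    (P : LinearMap.BilinForm ℝ (Module.Dual ℝ V)) (ρ : Module.Dual ℝ V) : V :=
  (Module.evalEquiv ℝ V).symm (P ρ)

theorem Submodule.isCompl_span_singleton_of_finrank_add_one {K V : Type*} [DivisionRing K]
    [AddCommGroup V] [Module K V] [FiniteDimensional K V] {S : Submodule K V} {v : V}
    (hS : finrank K S + 1 = finrank K V) (hv : v ∉ S) : IsCompl S (K ∙ v) := by
  have hv0 : v ≠ 0 := fun h => hv (h ▸ S.zero_mem)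
  rw [isCompl_iff_disjoint _ _ (by rw [finrank_span_singleton hv0, hS])]
  exact disjoint_span_singleton_of_notMem hv

theorem LinearMap.ext_on_codisjoint_span_singleton {R M M₂ : Type*} [Semiring R]
    [AddCommMonoid M] [AddCommMonoid M₂] [Module R M] [Module R M₂] {f g : M →ₗ[R] M₂}
    {S : Submodule R M} {v : M} (hS : Codisjoint S (R ∙ v)) (hfg : Set.EqOn f g S)
    (hv : f v = g v) : f = g :=
  ext_on_codisjoint hS hfg fun x hx => by
    obtain ⟨c, rfl⟩ := Submodule.mem_span_singleton.mp hx
    simp [hv]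

theorem LinearMap.BilinForm.existsUnique_restrict_apply_eq {K V : Type*} [Field K]
    [AddCommGroup V] [Module K V] [FiniteDimensional K V] {B : LinearMap.BilinForm K V}
    {S : Submodule K V} (hB : (B.restrict S).Nondegenerate) (α : Dual K V) :
    ∃! s : S, ∀ x : S, B s x = α x := by
  refine ⟨((B.restrict S).toDual hB).symm (α ∘ₗ S.subtype), fun x => ?_, fun s hs => ?_⟩
  · exact apply_toDual_symm_apply (B := B.restrict S) _ x
  · apply ((B.restrict S).toDual hB).injective
    ext x
    simp [toDual_def, hs x]

section NullData

variable {V : Type*} [AddCommGroup V] [Module ℝ V] [FiniteDimensional ℝ V]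
  {γ : LinearMap.BilinForm ℝ V} {ℓ : Dual ℝ V} {P : LinearMap.BilinForm ℝ (Dual ℝ V)} {n : V}

theorem Pvec_apply_eq_sub_smul (h4 : ∀ X : V, Pvec P (γ X) + ℓ X • n = X) (X : V) :
    Pvec P (γ X) = X - ℓ X • n :=
  eq_sub_of_add_eq (h4 X)

theorem ker_eq_span_singleton_of_null (hγn : γ n = 0)
    (h4 : ∀ X : V, Pvec P (γ X) + ℓ X • n = X) : LinearMap.ker γ = ℝ ∙ n := by
  refine le_antisymm (fun X hX => ?_) ((Submodule.span_singleton_le_iff_mem _ _).mpr hγn)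
  have hX : ℓ X • n = X := by simpa [LinearMap.mem_ker.mp hX, Pvec] using h4 X
  exact hX ▸ Submodule.smul_mem _ _ (Submodule.mem_span_singleton_self n)

end NullData

theorem Pvec_decomposition_on_S_general {V : Type*} [AddCommGroup V] [Module ℝ V]
    [FiniteDimensional ℝ V]
    (γ : LinearMap.BilinForm ℝ V) (hγsym : ∀ X Y : V, γ X Y = γ Y X)
    (ℓ : Module.Dual ℝ V)
    (P : LinearMap.BilinForm ℝ (Module.Dual ℝ V))
    (n : V) (n2 : ℝ) (hn2 : n2 = 0)
    (h1 : γ n + n2 • ℓ = 0)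
    (h4 : ∀ X : V, Pvec P (γ X) + ℓ X • n = X)
    (S : Submodule ℝ V)
    (hcodim : Module.finrank ℝ S + 1 = Module.finrank ℝ V) (hnS : n ∉ S) :
    (∃! lsharp : S, ∀ x : S, γ (lsharp : V) (x : V) = ℓ (x : V)) ∧
    ∀ β : Module.Dual ℝ V, β n = 0 →
      (∃! βsharp : S, ∀ x : S, γ (βsharp : V) (x : V) = β (x : V)) ∧
      (∀ (lsharp βsharp : S),
        (∀ x : S, γ (lsharp : V) (x : V) = ℓ (x : V)) →
        (∀ x : S, γ (βsharp : V) (x : V) = β (x : V)) →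
        Pvec P β = (βsharp : V) - β (lsharp : V) • n) := by
  subst hn2
  have hγn : γ n = 0 := by simpa using h1
  have hSn : IsCompl S (ℝ ∙ n) := S.isCompl_span_singleton_of_finrank_add_one hcodim hnS
  have hγS : (γ.restrict S).Nondegenerate :=
    LinearMap.IsSymm.nondegenerate_restrict_of_isCompl_ker ⟨hγsym⟩
      (ker_eq_span_singleton_of_null hγn h4 ▸ hSn)
  refine ⟨LinearMap.BilinForm.existsUnique_restrict_apply_eq hγS ℓ, fun β hβn =>
    ⟨LinearMap.BilinForm.existsUnique_restrict_apply_eq hγS β, fun lsharp βsharp hl hβ => ?_⟩⟩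
  have hγβ : γ βsharp = β :=
    LinearMap.ext_on_codisjoint_span_singleton hSn.codisjoint (fun x hx => hβ ⟨x, hx⟩)
      (by rw [hγsym, hγn, hβn, LinearMap.zero_apply])
  rw [← hγβ, Pvec_apply_eq_sub_smul h4, ← hl βsharp, hγsym, hβ lsharp]

/-- For null hypersurface data with a transverse codimension-one subspace `S`:
for every `β ∈ V*` with `β(n) = 0` one has `P(β,·) = β_∥^♯ − β(ℓ_∥^♯)·n`, where
`ℓ_∥^♯, β_∥^♯ ∈ S` are the (unique) vectors with `h(ℓ_∥^♯,·) = ℓ|_S` and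
`h(β_∥^♯,·) = β|_S`. -/
theorem Pvec_decomposition_on_S {V : Type*} [AddCommGroup V] [Module ℝ V]
    [FiniteDimensional ℝ V]
    (γ : LinearMap.BilinForm ℝ V) (hγsym : ∀ X Y : V, γ X Y = γ Y X)
    (ℓ : Module.Dual ℝ V) (ℓ2 : ℝ)
    (P : LinearMap.BilinForm ℝ (Module.Dual ℝ V)) (hPsym : ∀ α β, P α β = P β α)
    (n : V) (n2 : ℝ) (hn2 : n2 = 0)
    (h1 : γ n + n2 • ℓ = 0)
    (h2 : ℓ n + n2 * ℓ2 = 1)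
    (h3 : Pvec P ℓ + ℓ2 • n = 0)
    (h4 : ∀ X : V, Pvec P (γ X) + ℓ X • n = X)
    (S : Submodule ℝ V)
    (hcodim : Module.finrank ℝ S + 1 = Module.finrank ℝ V) (hnS : n ∉ S) :
    (∃! lsharp : S, ∀ x : S, γ (lsharp : V) (x : V) = ℓ (x : V)) ∧
    ∀ β : Module.Dual ℝ V, β n = 0 →
      (∃! βsharp : S, ∀ x : S, γ (βsharp : V) (x : V) = β (x : V)) ∧
      (∀ (lsharp βsharp : S),
        (∀ x : S, γ (lsharp : V) (x : V) = ℓ (x : V)) →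
        (∀ x : S, γ (βsharp : V) (x : V) = β (x : V)) →
        Pvec P β = (βsharp : V) - β (lsharp : V) • n) :=
  Pvec_decomposition_on_S_general γ hγsym ℓ P n n2 hn2 h1 h4 S hcodim hnS
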